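/- For fixed real x and integers m, n with |x - m| < |x - n|, the ratio ρ_n(x)/ρ_m(x) tends to 0 as k → ∞, where ρ_n(x) = k·σ(k(x - n))·(1 - σ(k(x - n))). -/
import Mathlib

noncomputable def sigma (z : ℝ) : ℝ := 1 / (1 + Real.exp (-z))

noncomputable def rho (n : ℤ) (k x : ℝ) : ℝ :=
  k * sigma (k * (x - (n : ℝ))) * (1 - sigma (k * (x - (n : ℝ))))

lemma sig_prod (z : ℝ) : sigma z * (1 - sigma z) = 1 / (2 * Real.cosh (z/2))^2 := by
  unfold sigma
  rw [Real.cosh_eq]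
  set u := Real.exp (z/2) with hu
  set v := Real.exp (-(z/2)) with hv
  have huv : u * v = 1 := by rw [hu, hv, ← Real.exp_add]; simp
  have hez : Real.exp (-z) = v * v := by rw [hv, ← Real.exp_add]; ring_nf
  have hup : 0 < u := Real.exp_pos _
  have hvp : 0 < v := Real.exp_pos _
  rw [hez]
  have h1 : (0:ℝ) < 1 + v * v := by positivity
  field_simp
  nlinarith [huv, sq_nonneg (u + v), sq_nonneg (u*v)]

lemma rho_eq (n : ℤ) (k x : ℝ) :
    rho n k x = k / (2 * Real.cosh (k * (x - (n:ℝ)) / 2))^2 := by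
  unfold rho
  rw [mul_assoc, sig_prod]
  ring

lemma cosh_le_exp_abs (t : ℝ) : Real.cosh t ≤ Real.exp |t| := by
  rw [Real.cosh_eq]
  rcases abs_cases t with ⟨h1, h2⟩ | ⟨h1, h2⟩ <;> rw [h1]
  · have := Real.exp_le_exp.2 (by linarith : -t ≤ t); linarith
  · have := Real.exp_le_exp.2 (by linarith : t ≤ -t); linarith

lemma exp_abs_le_two_cosh (t : ℝ) : Real.exp |t| ≤ 2 * Real.cosh t := by
  rw [Real.cosh_eq]
  rcases abs_cases t with ⟨h1, _⟩ | ⟨h1, _⟩ <;> rw [h1] <;>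
    nlinarith [Real.exp_pos t, Real.exp_pos (-t)]

theorem rho_ratio_tendsto_zero (x : ℝ) (m n : ℤ) (h : |x - (m : ℝ)| < |x - (n : ℝ)|) :
    Filter.Tendsto (fun k : ℝ => rho n k x / rho m k x) Filter.atTop (nhds 0) := by
  set a := x - (n:ℝ) with ha
  set b := x - (m:ℝ) with hb
  have hc : |b| - |a| < 0 := by linarith
  have key : ∀ k : ℝ, 0 < k →
      rho n k x / rho m k x ≤ 4 * Real.exp (k * (|b| - |a|)) := by
    intro k hk
    rw [rho_eq, rho_eq, ← ha, ← hb]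
    have hca : Real.exp (k * |a|) ≤ (2 * Real.cosh (k * a / 2))^2 := by
      have h1 := exp_abs_le_two_cosh (k * a / 2)
      have h2 : |k * a / 2| = k * |a| / 2 := by
        rw [abs_div, abs_mul, abs_of_pos hk]; simp
      rw [h2] at h1
      calc Real.exp (k * |a|) = Real.exp (k * |a| / 2) ^ 2 := by
            rw [← Real.exp_nat_mul]; ring_nf
        _ ≤ (2 * Real.cosh (k * a / 2))^2 := by
            apply pow_le_pow_left₀ (le_of_lt (Real.exp_pos _)) h1
    have hcb : (2 * Real.cosh (k * b / 2))^2 ≤ 4 * Real.exp (k * |b|) := by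
      have h1 := cosh_le_exp_abs (k * b / 2)
      have h2 : |k * b / 2| = k * |b| / 2 := by
        rw [abs_div, abs_mul, abs_of_pos hk]; simp
      rw [h2] at h1
      have h3 : (2 * Real.cosh (k * b / 2))^2 ≤ (2 * Real.exp (k * |b| / 2))^2 := by
        apply pow_le_pow_left₀ (by positivity) (by linarith)
      calc (2 * Real.cosh (k * b / 2))^2 ≤ (2 * Real.exp (k * |b| / 2))^2 := h3
        _ = 4 * Real.exp (k * |b|) := by
            rw [mul_pow, ← Real.exp_nat_mul]; norm_num; ring_nf
    have hub : k / (2 * Real.cosh (k * a / 2))^2 ≤ k / Real.exp (k * |a|) :=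
      div_le_div_of_nonneg_left (le_of_lt hk) (Real.exp_pos _) hca
    have hlb : k / (4 * Real.exp (k * |b|)) ≤ k / (2 * Real.cosh (k * b / 2))^2 := by
      apply div_le_div_of_nonneg_left (le_of_lt hk) (by positivity) hcb
    have hd : 0 < k / (4 * Real.exp (k * |b|)) := by positivity
    calc k / (2 * Real.cosh (k * a / 2))^2 / (k / (2 * Real.cosh (k * b / 2))^2)
        ≤ (k / Real.exp (k * |a|)) / (k / (4 * Real.exp (k * |b|))) := by
          apply div_le_div₀ (by positivity) hub hd hlb
      _ = 4 * Real.exp (k * (|b| - |a|)) := by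
          rw [show k * (|b| - |a|) = k * |b| - k * |a| by ring, Real.exp_sub]
          field_simp
  have hnonneg : ∀ k : ℝ, 0 < k → 0 ≤ rho n k x / rho m k x := by
    intro k hk
    rw [rho_eq, rho_eq]
    positivity
  have hg : Filter.Tendsto (fun k : ℝ => 4 * Real.exp (k * (|b| - |a|)))
      Filter.atTop (nhds 0) := by
    rw [show (0:ℝ) = 4 * 0 by ring]
    apply Filter.Tendsto.const_mul
    apply Real.tendsto_exp_atBot.comp
    exact Filter.Tendsto.atTop_mul_const_of_neg hc Filter.tendsto_id
  apply squeeze_zero' ?_ ?_ hg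
  · filter_upwards [Filter.eventually_gt_atTop 0] with k hk using hnonneg k hk
  · filter_upwards [Filter.eventually_gt_atTop 0] with k hk using key k hk
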